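/- arXiv:1810.01920 — 3 statements merged into one kernel-verified Lean document; each statement's English description precedes it below -/
import Mathlib

section
/- Let f₁ and f₂ be λ-strongly convex functions on a convex compact set X with respective minimizers x₁*, x₂* ∈ X. If the difference h = f₁ - f₂ is κ'-Lipschitz on X, then ‖x₁* - x₂*‖ ≤ 2κ'/λ. (This is the key perturbation bound used to prove Lipschitzness of the inverse-optimization loss.) -/
/-!
Strong monotonicity of the gradient makes each `fᵢ` grow quadratically away from its constrained
minimizer: combining the first-order lower bound with the variational inequality
`0 ≤ ⟪∇fᵢ(xᵢ*), y - xᵢ*⟫` gives `fᵢ xᵢ* + λ/2 ‖y - xᵢ*‖² ≤ fᵢ y` on `X`. Adding the two instances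
at `y = x₂*` and `y = x₁*` leaves `λ ‖x₁* - x₂*‖² ≤ h x₂* - h x₁* ≤ κ' ‖x₁* - x₂*‖`.
-/

open RealInnerProductSpace Set

variable {E : Type*} [NormedAddCommGroup E] [InnerProductSpace ℝ E] [CompleteSpace E]

def StronglyMonotoneOn (s : Set E) (m : ℝ) (F : E → E) : Prop :=
  ∀ x ∈ s, ∀ y ∈ s, m * ‖x - y‖ ^ 2 ≤ ⟪F y - F x, y - x⟫

variable {s : Set E} {f : E → ℝ} {f' : E → E} {g x y : E} {m : ℝ}

theorem HasGradientAt.hasDerivAt_comp_add_smul {t : ℝ} (v : E)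
    (h : HasGradientAt f g (x + t • v)) : HasDerivAt (fun t : ℝ ↦ f (x + t • v)) ⟪g, v⟫ t := by
  have hline : HasDerivAt (fun t : ℝ ↦ x + t • v) v t := by
    simpa using ((hasDerivAt_id t).smul_const v).const_add x
  exact h.hasFDerivAt.comp_hasDerivAt t hline

theorem StronglyMonotoneOn.add_inner_add_sq_le (hmono : StronglyMonotoneOn s m f')
    (hs : Convex ℝ s) (hf : ∀ z ∈ s, HasGradientAt f (f' z) z) (hx : x ∈ s) (hy : y ∈ s) :
    f x + ⟪f' x, y - x⟫ + m / 2 * ‖y - x‖ ^ 2 ≤ f y := by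
  set v := y - x
  -- The bound is `φ 0 ≤ φ 1`; `t * φ' t ≥ 0` is strong monotonicity between `x` and `x + t • v`.
  set φ : ℝ → ℝ := fun t ↦ f (x + t • v) - t * ⟪f' x, v⟫ - m / 2 * t ^ 2 * ‖v‖ ^ 2
  set φ' : ℝ → ℝ := fun t ↦ ⟪f' (x + t • v), v⟫ - ⟪f' x, v⟫ - m * t * ‖v‖ ^ 2
  have hφ : ∀ t ∈ Icc (0 : ℝ) 1, HasDerivAt φ (φ' t) t := by
    intro t ht
    have hquad := ((hasDerivAt_pow 2 t).const_mul (m / 2)).mul_const (‖v‖ ^ 2)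
    refine ((((hf _ (hs.add_smul_sub_mem hx hy ht)).hasDerivAt_comp_add_smul v).sub
      ((hasDerivAt_id t).mul_const ⟪f' x, v⟫)).sub hquad).congr_deriv ?_
    push_cast
    ring
  have hφ'_nonneg : ∀ t ∈ Ioo (0 : ℝ) 1, 0 ≤ φ' t := by
    intro t ht
    have h := hmono x hx _ (hs.add_smul_sub_mem hx hy (Ioo_subset_Icc_self ht))
    rw [show x - (x + t • v) = (-t) • v by module, add_sub_cancel_left, norm_smul,
      real_inner_smul_right, inner_sub_left, Real.norm_eq_abs, abs_neg, mul_pow, sq_abs] at h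
    nlinarith [ht.1]
  have hφ_mono : MonotoneOn φ (Icc 0 1) := by
    refine monotoneOn_of_hasDerivWithinAt_nonneg (f' := φ') (convex_Icc 0 1)
      (fun t ht ↦ (hφ t ht).continuousAt.continuousWithinAt) (fun t ht ↦ ?_) ?_
    · rw [interior_Icc] at ht
      exact (hφ t (Ioo_subset_Icc_self ht)).hasDerivWithinAt
    · simpa only [interior_Icc] using hφ'_nonneg
  have h01 := hφ_mono (left_mem_Icc.2 zero_le_one) (right_mem_Icc.2 zero_le_one) zero_le_one
  simp only [φ, zero_smul, one_smul, add_zero, v, add_sub_cancel] at h01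
  linarith

theorem IsMinOn.inner_gradient_sub_nonneg (hmin : IsMinOn f s x) (hs : Convex ℝ s)
    (hf : HasGradientAt f g x) (hx : x ∈ s) (hy : y ∈ s) : 0 ≤ ⟪g, y - x⟫ :=
  hmin.localize.hasFDerivWithinAt_nonneg hf.hasFDerivAt.hasFDerivWithinAt
    (sub_mem_posTangentConeAt_of_segment_subset (hs.segment_subset hx hy))

theorem IsMinOn.add_sq_le_of_stronglyMonotoneOn (hmin : IsMinOn f s x)
    (hmono : StronglyMonotoneOn s m f') (hs : Convex ℝ s)
    (hf : ∀ z ∈ s, HasGradientAt f (f' z) z) (hx : x ∈ s) (hy : y ∈ s) :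
    f x + m / 2 * ‖y - x‖ ^ 2 ≤ f y := by
  have hlower := hmono.add_inner_add_sq_le hs hf hx hy
  have hvar := hmin.inner_gradient_sub_nonneg hs (hf x hx) hx hy
  linarith

theorem strongly_convex_minimizer_perturbation_general
    {n : ℕ} (X : Set (EuclideanSpace ℝ (Fin n)))
    (hXconvex : Convex ℝ X)
    (f₁ f₂ : EuclideanSpace ℝ (Fin n) → ℝ)
    (f₁' f₂' : EuclideanSpace ℝ (Fin n) → EuclideanSpace ℝ (Fin n))
    (hdiff₁ : ∀ x, HasGradientAt f₁ (f₁' x) x)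
    (hdiff₂ : ∀ x, HasGradientAt f₂ (f₂' x) x)
    (lam : ℝ) (hlam : 0 < lam) (kappa' : ℝ) (hkappa' : 0 ≤ kappa')
    (hmono₁ : ∀ x ∈ X, ∀ y ∈ X, lam * ‖x - y‖ ^ 2 ≤ ⟪f₁' y - f₁' x, y - x⟫)
    (hmono₂ : ∀ x ∈ X, ∀ y ∈ X, lam * ‖x - y‖ ^ 2 ≤ ⟪f₂' y - f₂' x, y - x⟫)
    (x₁ x₂ : EuclideanSpace ℝ (Fin n)) (hx₁ : x₁ ∈ X) (hx₂ : x₂ ∈ X)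
    (hmin₁ : ∀ x ∈ X, f₁ x₁ ≤ f₁ x) (hmin₂ : ∀ x ∈ X, f₂ x₂ ≤ f₂ x)
    (hLip : ∀ x ∈ X, ∀ y ∈ X,
      |(f₁ x - f₂ x) - (f₁ y - f₂ y)| ≤ kappa' * ‖x - y‖) :
    ‖x₁ - x₂‖ ≤ 2 * kappa' / lam := by
  have hgrowth₁ := IsMinOn.add_sq_le_of_stronglyMonotoneOn hmin₁ hmono₁ hXconvex
    (fun z _ ↦ hdiff₁ z) hx₁ hx₂
  have hgrowth₂ := IsMinOn.add_sq_le_of_stronglyMonotoneOn hmin₂ hmono₂ hXconvex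
    (fun z _ ↦ hdiff₂ z) hx₂ hx₁
  have hLip₂₁ := (le_abs_self _).trans (hLip x₂ hx₂ x₁ hx₁)
  rw [norm_sub_rev] at hgrowth₁ hLip₂₁
  have hsq : lam * ‖x₁ - x₂‖ * ‖x₁ - x₂‖ ≤ kappa' * ‖x₁ - x₂‖ := by linarith
  have hlin : lam * ‖x₁ - x₂‖ ≤ kappa' := by
    rcases (norm_nonneg (x₁ - x₂)).eq_or_lt with h0 | hpos
    · simp [← h0, hkappa']
    · exact le_of_mul_le_mul_right hsq hpos
  rw [le_div_iff₀ hlam]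
  linarith

/-- Perturbation bound: if `f₁, f₂` are λ-strongly convex on a convex compact set `X`
with minimizers `x₁*, x₂*`, and `h = f₁ - f₂` is κ'-Lipschitz on `X`, then
`‖x₁* - x₂*‖ ≤ 2κ'/λ`. -/
theorem strongly_convex_minimizer_perturbation
    {n : ℕ} (X : Set (EuclideanSpace ℝ (Fin n)))
    (hXconvex : Convex ℝ X) (hXcompact : IsCompact X)
    (f₁ f₂ : EuclideanSpace ℝ (Fin n) → ℝ)
    (f₁' f₂' : EuclideanSpace ℝ (Fin n) → EuclideanSpace ℝ (Fin n))
    (hdiff₁ : ∀ x, HasGradientAt f₁ (f₁' x) x)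
    (hdiff₂ : ∀ x, HasGradientAt f₂ (f₂' x) x)
    (lam : ℝ) (hlam : 0 < lam) (kappa' : ℝ) (hkappa' : 0 ≤ kappa')
    (hmono₁ : ∀ x ∈ X, ∀ y ∈ X, lam * ‖x - y‖ ^ 2 ≤ ⟪f₁' y - f₁' x, y - x⟫)
    (hmono₂ : ∀ x ∈ X, ∀ y ∈ X, lam * ‖x - y‖ ^ 2 ≤ ⟪f₂' y - f₂' x, y - x⟫)
    (x₁ x₂ : EuclideanSpace ℝ (Fin n)) (hx₁ : x₁ ∈ X) (hx₂ : x₂ ∈ X)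
    (hmin₁ : ∀ x ∈ X, f₁ x₁ ≤ f₁ x) (hmin₂ : ∀ x ∈ X, f₂ x₂ ≤ f₂ x)
    (hLip : ∀ x ∈ X, ∀ y ∈ X,
      |(f₁ x - f₂ x) - (f₁ y - f₂ y)| ≤ kappa' * ‖x - y‖) :
    ‖x₁ - x₂‖ ≤ 2 * kappa' / lam :=
  strongly_convex_minimizer_perturbation_general X hXconvex f₁ f₂ f₁' f₂' hdiff₁ hdiff₂ lam hlam
    kappa' hkappa' hmono₁ hmono₂ x₁ x₂ hx₁ hx₂ hmin₁ hmin₂ hLip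
end

section
/- Under the assumptions above, the map θ ↦ S(θ) (the unique minimizer of the λ-strongly convex objective f(·, θ) over X) is (2κ/λ)-Lipschitz in θ: ‖S(θ₁) - S(θ₂)‖ ≤ (2κ/λ)‖θ₁ - θ₂‖. -/
/-!
Both minimizers satisfy the first-order optimality condition over the convex set `X`.
Adding the two variational inequalities to the strong monotonicity of `f' θ₁` leaves
`λ‖S θ₁ - S θ₂‖² ≤ ⟪f' θ₂ (S θ₂) - f' θ₁ (S θ₂), S θ₁ - S θ₂⟫`, and the right side is a
directional derivative of `f(·, θ₂) - f(·, θ₁)`, which the mixed Lipschitz condition bounds by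
`κ‖θ₁ - θ₂‖‖S θ₁ - S θ₂‖`. This even gives the constant `κ/λ`.
-/

open RealInnerProductSpace

section

variable {E : Type*} [NormedAddCommGroup E] [NormedSpace ℝ E]

theorem IsMinOn.hasFDerivAt_nonneg_of_convex {g : E → ℝ} {g' : E →L[ℝ] ℝ} {X : Set E}
    {x y : E} (hmin : IsMinOn g X x) (hX : Convex ℝ X) (hx : x ∈ X) (hy : y ∈ X)
    (hg : HasFDerivAt g g' x) : 0 ≤ g' (y - x) :=
  hmin.localize.hasFDerivWithinAt_nonneg hg.hasFDerivWithinAt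
    (sub_mem_posTangentConeAt_of_segment_subset (hX.segment_subset hx hy))

theorem HasFDerivAt.le_of_sub_le_mul_norm {g : E → ℝ} {g' : E →L[ℝ] ℝ} {X : Set E}
    {x y : E} {C : ℝ} (hg : HasFDerivAt g g' x) (hX : Convex ℝ X) (hx : x ∈ X) (hy : y ∈ X)
    (hbound : ∀ z ∈ X, g z - g x ≤ C * ‖z - x‖) : g' (y - x) ≤ C * ‖y - x‖ := by
  -- On the segment, `g` rises no faster than `C‖y - x‖ t`, so `φ` is minimal at `t = 0`.
  set φ : ℝ → ℝ := fun t => C * ‖y - x‖ * t - g (x + t • (y - x))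
  have hφ : HasDerivAt φ (C * ‖y - x‖ - g' (y - x)) 0 := by
    have hline : HasDerivAt (fun t : ℝ => x + t • (y - x)) (y - x) 0 := by
      simpa using ((hasDerivAt_id (0 : ℝ)).smul_const (y - x)).const_add x
    simpa using ((hasDerivAt_id (0 : ℝ)).const_mul (C * ‖y - x‖)).fun_sub
      (hg.comp_hasDerivAt_of_eq (0 : ℝ) hline (by simp))
  have hφmin : IsMinOn φ (Set.Icc 0 1) 0 := by
    intro t ht
    have hmem : x + t • (y - x) ∈ X := by
      simpa [add_sub_cancel] using hX.add_smul_sub_mem hx hy ht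
    have := hbound _ hmem
    simp only [add_sub_cancel_left, norm_smul, Real.norm_of_nonneg ht.1] at this
    change φ 0 ≤ φ t
    simp only [φ, zero_smul, add_zero, mul_zero, zero_sub]
    linarith
  simpa using hφmin.hasFDerivAt_nonneg_of_convex (convex_Icc 0 1) (y := 1) (by simp) (by simp)
    hφ.hasFDerivAt

end

section

variable {E : Type*} [NormedAddCommGroup E] [InnerProductSpace ℝ E]

theorem norm_sub_le_div_of_inner_bounds {a b c x y : E} {lam K : ℝ} (hlam : 0 < lam)
    (hK : 0 ≤ K) (hmono : lam * ‖x - y‖ ^ 2 ≤ ⟪b - a, y - x⟫) (ha : 0 ≤ ⟪a, y - x⟫)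
    (hc : 0 ≤ ⟪c, x - y⟫) (hpert : ⟪c - b, x - y⟫ ≤ K * ‖x - y‖) :
    ‖x - y‖ ≤ K / lam := by
  have key : lam * ‖x - y‖ ^ 2 ≤ K * ‖x - y‖ := by
    have hexpand : ⟪b - a, y - x⟫ = ⟪c - b, x - y⟫ - ⟪c, x - y⟫ - ⟪a, y - x⟫ := by
      rw [← neg_sub x y, inner_neg_right, inner_neg_right]
      simp only [inner_sub_left]
      ring
    linarith
  rw [le_div_iff₀ hlam]
  rcases (norm_nonneg (x - y)).eq_or_lt with h0 | hpos
  · simp [← h0, hK]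
  · nlinarith

end

theorem minimizer_map_lipschitz_general
    {n p : ℕ} (Θ : Set (EuclideanSpace ℝ (Fin p)))
    (X : Set (EuclideanSpace ℝ (Fin n)))
    (hXconvex : Convex ℝ X)
    (lam kappa : ℝ) (hlam : 0 < lam) (hkappa : 0 < kappa)
    (f : EuclideanSpace ℝ (Fin n) → EuclideanSpace ℝ (Fin p) → ℝ)
    (f' : EuclideanSpace ℝ (Fin p) → EuclideanSpace ℝ (Fin n) → EuclideanSpace ℝ (Fin n))
    (hdiff : ∀ θ ∈ Θ, ∀ x, HasGradientAt (fun z => f z θ) (f' θ x) x)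
    (hmono : ∀ θ ∈ Θ, ∀ x ∈ X, ∀ y ∈ X,
      lam * ‖x - y‖ ^ 2 ≤ ⟪f' θ y - f' θ x, y - x⟫)
    (S : EuclideanSpace ℝ (Fin p) → EuclideanSpace ℝ (Fin n))
    (hSmem : ∀ θ ∈ Θ, S θ ∈ X)
    (hSmin : ∀ θ ∈ Θ, ∀ x ∈ X, f (S θ) θ ≤ f x θ)
    (hdiffLip : ∀ θ₁ ∈ Θ, ∀ θ₂ ∈ Θ, ∀ x ∈ X, ∀ x' ∈ X,
      |(f x θ₁ - f x θ₂) - (f x' θ₁ - f x' θ₂)| ≤ kappa * ‖θ₁ - θ₂‖ * ‖x - x'‖) :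
    ∀ θ₁ ∈ Θ, ∀ θ₂ ∈ Θ, ‖S θ₁ - S θ₂‖ ≤ 2 * kappa / lam * ‖θ₁ - θ₂‖ := by
  intro θ₁ h₁ θ₂ h₂
  have hX₁ := hSmem θ₁ h₁
  have hX₂ := hSmem θ₂ h₂
  have hmin : ∀ θ ∈ Θ, IsMinOn (fun z => f z θ) X (S θ) := fun θ hθ =>
    isMinOn_iff.2 (hSmin θ hθ)
  have opt₁ : 0 ≤ ⟪f' θ₁ (S θ₁), S θ₂ - S θ₁⟫ :=
    (hmin θ₁ h₁).hasFDerivAt_nonneg_of_convex hXconvex hX₁ hX₂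
      (hdiff θ₁ h₁ _).hasFDerivAt
  have opt₂ : 0 ≤ ⟪f' θ₂ (S θ₂), S θ₁ - S θ₂⟫ :=
    (hmin θ₂ h₂).hasFDerivAt_nonneg_of_convex hXconvex hX₂ hX₁
      (hdiff θ₂ h₂ _).hasFDerivAt
  have hpert : ⟪f' θ₂ (S θ₂) - f' θ₁ (S θ₂), S θ₁ - S θ₂⟫
      ≤ kappa * ‖θ₂ - θ₁‖ * ‖S θ₁ - S θ₂‖ := by
    have := ((hdiff θ₂ h₂ _).hasFDerivAt.sub (hdiff θ₁ h₁ _).hasFDerivAt).le_of_sub_le_mul_norm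
      hXconvex hX₂ hX₁ fun z hz => (le_abs_self _).trans (hdiffLip θ₂ h₂ θ₁ h₁ z hz _ hX₂)
    simpa [inner_sub_left] using this
  calc ‖S θ₁ - S θ₂‖ ≤ kappa * ‖θ₂ - θ₁‖ / lam :=
        norm_sub_le_div_of_inner_bounds hlam (by positivity)
          (hmono θ₁ h₁ _ hX₁ _ hX₂) opt₁ opt₂ hpert
    _ ≤ 2 * kappa / lam * ‖θ₁ - θ₂‖ := by
        rw [norm_sub_rev θ₂, mul_div_right_comm, mul_div_assoc]
        gcongr
        linarith [div_pos hkappa hlam]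

/-- The minimizer map `θ ↦ S(θ)` of a λ-strongly convex objective over a convex
compact set `X` is `(2κ/λ)`-Lipschitz in `θ`. -/
theorem minimizer_map_lipschitz
    {n p : ℕ} (Θ : Set (EuclideanSpace ℝ (Fin p)))
    (X : Set (EuclideanSpace ℝ (Fin n)))
    (hXconvex : Convex ℝ X) (hXcompact : IsCompact X)
    (lam kappa : ℝ) (hlam : 0 < lam) (hkappa : 0 < kappa)
    (f : EuclideanSpace ℝ (Fin n) → EuclideanSpace ℝ (Fin p) → ℝ)
    (f' : EuclideanSpace ℝ (Fin p) → EuclideanSpace ℝ (Fin n) → EuclideanSpace ℝ (Fin n))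
    (hdiff : ∀ θ ∈ Θ, ∀ x, HasGradientAt (fun z => f z θ) (f' θ x) x)
    (hmono : ∀ θ ∈ Θ, ∀ x ∈ X, ∀ y ∈ X,
      lam * ‖x - y‖ ^ 2 ≤ ⟪f' θ y - f' θ x, y - x⟫)
    (S : EuclideanSpace ℝ (Fin p) → EuclideanSpace ℝ (Fin n))
    (hSmem : ∀ θ ∈ Θ, S θ ∈ X)
    (hSmin : ∀ θ ∈ Θ, ∀ x ∈ X, f (S θ) θ ≤ f x θ)
    (hdiffLip : ∀ θ₁ ∈ Θ, ∀ θ₂ ∈ Θ, ∀ x ∈ X, ∀ x' ∈ X,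
      |(f x θ₁ - f x θ₂) - (f x' θ₁ - f x' θ₂)| ≤ kappa * ‖θ₁ - θ₂‖ * ‖x - x'‖) :
    ∀ θ₁ ∈ Θ, ∀ θ₂ ∈ Θ, ‖S θ₁ - S θ₂‖ ≤ 2 * kappa / lam * ‖θ₁ - θ₂‖ :=
  minimizer_map_lipschitz_general Θ X hXconvex lam kappa hlam hkappa f f' hdiff hmono S hSmem hSmin
    hdiffLip
end

section
/- Consider online convex optimization with convex L-Lipschitz losses g_t : Θ → ℝ on a convex compact set Θ of diameter at most D (‖θ - θ'‖ ≤ D for all θ, θ' ∈ Θ), using implicit (proximal) updates θ_{t+1} = argmin_{θ∈Θ}(½‖θ-θ_t‖² + η_t g_t(θ)) with step sizes η_t = (D/(2L))·(1/√t). Then the regret satisfies Σ_{t=1}^T g_t(θ_t) - min_{θ∈Θ} Σ_{t=1}^T g_t(θ) ≤ 2DL√T. -/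
/-!
The implicit update minimizes a `1`-strongly convex objective, so for every comparator `θ*` the
three-point inequality gives
`η_t (g_t θ_{t+1} - g_t θ*) ≤ ½‖θ* - θ_t‖² - ½‖θ* - θ_{t+1}‖² - ½‖θ_{t+1} - θ_t‖²`;
Lipschitz continuity and AM-GM trade the last term for `g_t θ_t - g_t θ_{t+1}` at the price
`η_t L² / 2`. After dividing by `η_t` and summing, the distance terms are summed by parts against
the increasing weights `1 / (2 η_t) = L √t / D` and contribute at most `D² / (2 η_T) = D L √T`,
while `∑ η_t L² / 2 ≤ D L √T / 2` because `∑_{t ≤ T} 1 / √t ≤ 2 √T`.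
-/

open Filter Topology Finset

section NormedSpace

variable {E : Type*} [NormedAddCommGroup E] [NormedSpace ℝ E] {s : Set E} {f : E → ℝ} {m : ℝ}
  {u v : E}

theorem StrongConvexOn.add_le_of_isMinOn (hf : StrongConvexOn s m f) (hmin : IsMinOn f s u)
    (hu : u ∈ s) (hv : v ∈ s) : f u + m / 2 * ‖v - u‖ ^ 2 ≤ f v := by
  have hsegment : ∀ t ∈ Set.Ioc (0 : ℝ) 1, f u + (1 - t) * (m / 2 * ‖v - u‖ ^ 2) ≤ f v := by
    rintro t ⟨ht0, ht1⟩
    have hconv := hf.2 hv hu ht0.le (sub_nonneg.2 ht1) (add_sub_cancel t 1)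
    have hmin_at : f u ≤ f (t • v + (1 - t) • u) :=
      hmin (hf.1 hv hu ht0.le (sub_nonneg.2 ht1) (add_sub_cancel t 1))
    simp only [smul_eq_mul] at hconv
    have : t * (f u + (1 - t) * (m / 2 * ‖v - u‖ ^ 2)) ≤ t * f v := by linarith
    exact le_of_mul_le_mul_left this ht0
  have hlim : Tendsto (fun t : ℝ ↦ f u + (1 - t) * (m / 2 * ‖v - u‖ ^ 2)) (𝓝[>] 0)
      (𝓝 (f u + m / 2 * ‖v - u‖ ^ 2)) := by
    have : Continuous fun t : ℝ ↦ f u + (1 - t) * (m / 2 * ‖v - u‖ ^ 2) := by fun_prop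
    simpa using (this.tendsto 0).mono_left nhdsWithin_le_nhds
  exact le_of_tendsto hlim (eventually_of_mem (Ioc_mem_nhdsGT one_pos) hsegment)

end NormedSpace

section InnerProductSpace

variable {E : Type*} [NormedAddCommGroup E] [InnerProductSpace ℝ E] {s : Set E} {G : E → ℝ}
  {η L : ℝ} {c u v : E}

theorem ConvexOn.strongConvexOn_half_sq_norm_sub_add (hG : ConvexOn ℝ s G) (hη : 0 ≤ η) (c : E) :
    StrongConvexOn s 1 fun x ↦ 1 / 2 * ‖x - c‖ ^ 2 + η * G x := by
  rw [strongConvexOn_iff_convex]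
  have hsplit : (fun x ↦ 1 / 2 * ‖x - c‖ ^ 2 + η * G x - 1 / 2 * ‖x‖ ^ 2) =
      fun x ↦ η • G x + (innerₛₗ ℝ (-c) x + 1 / 2 * ‖c‖ ^ 2) := by
    ext x
    simp only [norm_sub_sq_real, innerₛₗ_apply_apply, inner_neg_left, real_inner_comm c x,
      smul_eq_mul]
    ring
  rw [hsplit]
  exact (hG.smul hη).add (((innerₛₗ ℝ (-c)).convexOn hG.1).add_const _)

theorem prox_step_le (hG : ConvexOn ℝ s G) (hGLip : ∀ x ∈ s, ∀ y ∈ s, |G x - G y| ≤ L * ‖x - y‖)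
    (hη : 0 ≤ η) (hmin : IsMinOn (fun x ↦ 1 / 2 * ‖x - c‖ ^ 2 + η * G x) s u)
    (hc : c ∈ s) (hu : u ∈ s) (hv : v ∈ s) :
    η * (G c - G v) ≤ (‖v - c‖ ^ 2 - ‖v - u‖ ^ 2) / 2 + η ^ 2 * L ^ 2 / 2 := by
  have hthree := (hG.strongConvexOn_half_sq_norm_sub_add hη c).add_le_of_isMinOn hmin hu hv
  have hlip : η * (G c - G u) ≤ η * (L * ‖c - u‖) :=
    mul_le_mul_of_nonneg_left ((le_abs_self _).trans (hGLip c hc u hu)) hη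
  rw [norm_sub_rev c u] at hlip
  nlinarith [sq_nonneg (‖u - c‖ - η * L)]

end InnerProductSpace

theorem sum_Icc_mul_sub_succ_le {a b : ℕ → ℝ} {C : ℝ} (hb : Monotone b) (hb0 : 0 ≤ b 0)
    (ha : ∀ t, a t ≤ C) (T : ℕ) :
    ∑ t ∈ Icc 1 T, b t * (a t - a (t + 1)) ≤ b T * (C - a (T + 1)) := by
  induction T with
  | zero => simpa using mul_nonneg hb0 (sub_nonneg.2 (ha 1))
  | succ T ih =>
    rw [sum_Icc_succ_top (by omega)]
    nlinarith [mul_nonneg (sub_nonneg.2 (hb T.le_succ)) (sub_nonneg.2 (ha (T + 1)))]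

theorem sum_Icc_one_div_sqrt_le (T : ℕ) : ∑ t ∈ Icc 1 T, 1 / √(t : ℝ) ≤ 2 * √(T : ℝ) := by
  induction T with
  | zero => simp
  | succ T ih =>
    rw [sum_Icc_succ_top (by omega)]
    have hT : (0 : ℝ) ≤ T := T.cast_nonneg
    have hpos : 0 < √((T : ℝ) + 1) := Real.sqrt_pos.2 (by positivity)
    -- `1 / √(T+1) ≤ 2 / (√(T+1) + √T) = 2 (√(T+1) - √T)`
    have hincr : 1 / √((T : ℝ) + 1) ≤ 2 * √((T : ℝ) + 1) - 2 * √(T : ℝ) := by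
      rw [div_le_iff₀ hpos]
      nlinarith [Real.sq_sqrt hT, Real.sq_sqrt (by positivity : (0 : ℝ) ≤ T + 1),
        Real.sqrt_le_sqrt (by linarith : (T : ℝ) ≤ T + 1), Real.sqrt_nonneg (T : ℝ)]
    push_cast
    linarith

theorem implicit_online_learning_regret_general
    {p : ℕ} (Θ : Set (EuclideanSpace ℝ (Fin p)))
    (hconvex : Convex ℝ Θ)
    (D L : ℝ) (hD : 0 < D) (hL : 0 < L)
    (hdiam : ∀ θ ∈ Θ, ∀ θ' ∈ Θ, ‖θ - θ'‖ ≤ D)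
    (g : ℕ → EuclideanSpace ℝ (Fin p) → ℝ)
    (hgconv : ∀ t, ConvexOn ℝ Set.univ (g t))
    (hgLip : ∀ t, ∀ θ₁ θ₂ : EuclideanSpace ℝ (Fin p), |g t θ₁ - g t θ₂| ≤ L * ‖θ₁ - θ₂‖)
    (θ : ℕ → EuclideanSpace ℝ (Fin p)) (hθmem : ∀ t, θ t ∈ Θ)
    (hupdate : ∀ t ≥ 1, ∀ θ' ∈ Θ,
      (1 : ℝ) / 2 * ‖θ (t + 1) - θ t‖ ^ 2 + D / (2 * L * Real.sqrt t) * g t (θ (t + 1)) ≤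
        (1 : ℝ) / 2 * ‖θ' - θ t‖ ^ 2 + D / (2 * L * Real.sqrt t) * g t θ')
    (T : ℕ) :
    ∀ θstar ∈ Θ,
      ∑ t ∈ Finset.Icc 1 T, g t (θ t) - ∑ t ∈ Finset.Icc 1 T, g t θstar ≤
        2 * D * L * Real.sqrt T := by
  intro θstar hθstar
  set a : ℕ → ℝ := fun t ↦ ‖θstar - θ t‖ ^ 2
  have hstep : ∀ t ∈ Icc 1 T, g t (θ t) - g t θstar ≤
      L / D * √(t : ℝ) * (a t - a (t + 1)) + D * L / 4 * (1 / √(t : ℝ)) := by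
    intro t ht
    have hsqrt : 0 < √(t : ℝ) := Real.sqrt_pos.2 (by exact_mod_cast (mem_Icc.1 ht).1)
    have hη : 0 < D / (2 * L * √(t : ℝ)) := by positivity
    have hprox := prox_step_le ((hgconv t).subset (Set.subset_univ Θ) hconvex)
      (fun x _ y _ ↦ hgLip t x y) hη.le (hupdate t (mem_Icc.1 ht).1)
      (hθmem t) (hθmem (t + 1)) hθstar
    refine le_of_mul_le_mul_left (hprox.trans_eq ?_) hη
    field_simp
    ring
  have ha : ∀ t, a t ≤ D ^ 2 := fun t ↦
    pow_le_pow_left₀ (norm_nonneg _) (hdiam θstar hθstar (θ t) (hθmem t)) 2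
  have hb : Monotone fun t : ℕ ↦ L / D * √(t : ℝ) := fun s t hst ↦ by
    dsimp only
    gcongr
  rw [← sum_sub_distrib]
  calc _ ≤ ∑ t ∈ Icc 1 T, (L / D * √(t : ℝ) * (a t - a (t + 1)) + D * L / 4 * (1 / √(t : ℝ))) :=
        sum_le_sum hstep
    _ = ∑ t ∈ Icc 1 T, L / D * √(t : ℝ) * (a t - a (t + 1)) +
          D * L / 4 * ∑ t ∈ Icc 1 T, 1 / √(t : ℝ) := by
        rw [sum_add_distrib, mul_sum]
    _ ≤ L / D * √(T : ℝ) * (D ^ 2 - a (T + 1)) + D * L / 4 * (2 * √(T : ℝ)) :=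
        add_le_add (sum_Icc_mul_sub_succ_le hb (by simp) ha T)
          (mul_le_mul_of_nonneg_left (sum_Icc_one_div_sqrt_le T) (by positivity))
    _ ≤ 2 * D * L * √(T : ℝ) := by
        have hlast : 0 ≤ L / D * √(T : ℝ) * a (T + 1) := by positivity
        have hscale : L / D * √(T : ℝ) * D ^ 2 = D * L * √(T : ℝ) := by field_simp
        nlinarith [Real.sqrt_nonneg (T : ℝ), mul_pos hD hL]

/-- Regret bound for online convex optimization with implicit (proximal) updates:
with convex `L`-Lipschitz losses on a convex compact set of diameter at most `D`, and
step sizes `η_t = D/(2L√t)`, the regret after `T` rounds is at most `2DL√T`. -/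
theorem implicit_online_learning_regret
    {p : ℕ} (Θ : Set (EuclideanSpace ℝ (Fin p)))
    (hne : Θ.Nonempty) (hconvex : Convex ℝ Θ) (hcompact : IsCompact Θ)
    (D L : ℝ) (hD : 0 < D) (hL : 0 < L)
    (hdiam : ∀ θ ∈ Θ, ∀ θ' ∈ Θ, ‖θ - θ'‖ ≤ D)
    (g : ℕ → EuclideanSpace ℝ (Fin p) → ℝ)
    (hgconv : ∀ t, ConvexOn ℝ Set.univ (g t))
    (hgLip : ∀ t, ∀ θ₁ θ₂ : EuclideanSpace ℝ (Fin p), |g t θ₁ - g t θ₂| ≤ L * ‖θ₁ - θ₂‖)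
    (θ : ℕ → EuclideanSpace ℝ (Fin p)) (hθmem : ∀ t, θ t ∈ Θ)
    (hupdate : ∀ t ≥ 1, ∀ θ' ∈ Θ,
      (1 : ℝ) / 2 * ‖θ (t + 1) - θ t‖ ^ 2 + D / (2 * L * Real.sqrt t) * g t (θ (t + 1)) ≤
        (1 : ℝ) / 2 * ‖θ' - θ t‖ ^ 2 + D / (2 * L * Real.sqrt t) * g t θ')
    (T : ℕ) (hT : 1 ≤ T) :
    ∀ θstar ∈ Θ,
      ∑ t ∈ Finset.Icc 1 T, g t (θ t) - ∑ t ∈ Finset.Icc 1 T, g t θstar ≤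
        2 * D * L * Real.sqrt T :=
  implicit_online_learning_regret_general Θ hconvex D L hD hL hdiam g hgconv hgLip θ hθmem hupdate T
end
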